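/- Let τ be a finite unordered rooted tree and let θ be obtained from τ by a sequence of allowed inserting operations AI and AS. Then the height of θ equals the height of τ, and more generally for every vertex u of τ, the height of the subtree rooted at u in θ equals H(τ[u]). -/
import Mathlib


/-- A finite rooted tree whose vertices form a finite subset `supp` of `ℕ`.
`par` maps each vertex to its parent; the root is a fixed point of `par`
(so it has no parent), and every vertex reaches the root by iterating `par`
(connectedness / acyclicity). -/
structure FTree where
  supp : Finset ℕ
  root : ℕ
  root_mem : root ∈ supp
  par : ℕ → ℕ
  par_mem : ∀ v ∈ supp, par v ∈ supp
  par_root : par root = root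
  reach : ∀ v ∈ supp, ∃ n, par^[n] v = root

namespace FTree

/-- Depth of a vertex: least number of parent steps needed to reach the root. -/
noncomputable def depth (t : FTree) (v : ℕ) : ℕ :=
  if h : v ∈ t.supp then Nat.find (t.reach v h) else 0

/-- `w` is a (weak) descendant of `v` in `t`. -/
def IsDesc (t : FTree) (v w : ℕ) : Prop :=
  w ∈ t.supp ∧ ∃ n ≤ t.depth w, t.par^[n] w = v

open Classical in
/-- Vertex set of the subtree `t[v]` rooted at `v`. -/
noncomputable def desc (t : FTree) (v : ℕ) : Finset ℕ :=
  t.supp.filter (fun w => t.IsDesc v w)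

/-- Height of the subtree `t[v]` rooted at `v`. -/
noncomputable def heightAt (t : FTree) (v : ℕ) : ℕ :=
  (t.desc v).sup (fun w => t.depth w) - t.depth v

/-- Height of the tree. -/
noncomputable def height (t : FTree) : ℕ := t.heightAt t.root

/-- The set of children of `v` in `t`. -/
def children (t : FTree) (v : ℕ) : Finset ℕ :=
  t.supp.filter (fun w => t.par w = v ∧ w ≠ t.root)

open Classical in
/-- `γ_h(v)`: number of children of `v` whose subtree has height `h`. -/
noncomputable def gam (t : FTree) (v h : ℕ) : ℕ :=
  ((t.children v).filter (fun c => t.heightAt c = h)).card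

/-- The subtree of `t` rooted at `v` is isomorphic (as an unordered rooted tree)
to the subtree of `s` rooted at `w`: a bijection between the vertex sets sending
root to root and commuting with the parent maps (i.e. mapping edges to edges). -/
def SubtreeIso (t : FTree) (v : ℕ) (s : FTree) (w : ℕ) : Prop :=
  ∃ φ : ℕ → ℕ, Set.BijOn φ (t.desc v : Set ℕ) (s.desc w : Set ℕ) ∧ φ v = w ∧
    ∀ x ∈ t.desc v, x ≠ v → φ (t.par x) = s.par (φ x)

/-- Isomorphism of rooted trees. -/
def TreeIso (t s : FTree) : Prop := SubtreeIso t t.root s s.root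

/-- A tree is self-nested if any two of its subtrees of the same height
are isomorphic. -/
def SelfNested (t : FTree) : Prop :=
  ∀ v ∈ t.supp, ∀ w ∈ t.supp, t.heightAt v = t.heightAt w → SubtreeIso t v t w

open Classical in
/-- Height profile entry `ρ_t(h1,h2)`: the multiset (family up to permutation) of
the values `γ_{h2}(v)` over all vertices `v` of `t` with `H(t[v]) = h1`. -/
noncomputable def profile (t : FTree) (h1 h2 : ℕ) : Multiset ℕ :=
  (t.supp.filter (fun v => t.heightAt v = h1)).val.map (fun v => t.gam v h2)

/-- Number of vertices of `t`. -/
def numV (t : FTree) : ℕ := t.supp.card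

/-- `a` is a (weak) ancestor of `b`. -/
def IsAnc (t : FTree) (a b : ℕ) : Prop := ∃ n, t.par^[n] b = a

/-- `a` is a proper ancestor of `b`. -/
def ProperAnc (t : FTree) (a b : ℕ) : Prop := a ≠ b ∧ t.IsAnc a b

/-- `l` is the least common ancestor of `a` and `b`. -/
def IsLCA (t : FTree) (a b l : ℕ) : Prop :=
  l ∈ t.supp ∧ t.IsAnc l a ∧ t.IsAnc l b ∧
    ∀ m ∈ t.supp, t.IsAnc m a → t.IsAnc m b → t.IsAnc m l

/-- `φ`, restricted to the domain `D ⊆ t.supp`, is a constrained mapping in the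
sense of Zhang from `t` to `s`: a one-to-one correspondence preserving the
ancestor order, satisfying moreover Zhang's condition on least common ancestors. -/
def ZhangMapping (t s : FTree) (D : Finset ℕ) (φ : ℕ → ℕ) : Prop :=
  D ⊆ t.supp ∧ (∀ x ∈ D, φ x ∈ s.supp) ∧ Set.InjOn φ (D : Set ℕ) ∧
  (∀ a ∈ D, ∀ b ∈ D, (t.ProperAnc a b ↔ s.ProperAnc (φ a) (φ b))) ∧
  (∀ v1 ∈ D, ∀ v2 ∈ D, ∀ v3 ∈ D, ∀ l l',
    t.IsLCA v1 v2 l → s.IsLCA (φ v1) (φ v2) l' →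
    (t.ProperAnc l v3 ↔ s.ProperAnc l' (φ v3)))

/-- Allowed inserting operation (AI): adding a new internal vertex `w` as a child of
`v`, making `w` the parent of the child `c` of `v`; allowed only if
`H(t[c]) + 1 < H(t[v])`. -/
def InsertAI (t θ : FTree) : Prop :=
  ∃ v c w, v ∈ t.supp ∧ c ∈ t.children v ∧ w ∉ t.supp ∧
    t.heightAt c + 1 < t.heightAt v ∧
    θ.supp = insert w t.supp ∧ θ.root = t.root ∧
    θ.par w = v ∧ θ.par c = w ∧ ∀ x ∈ t.supp, x ≠ c → θ.par x = t.par x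

/-- Allowed inserting operation (AS): attaching a tree `s` as a new child subtree of
`v`; allowed only if `H(s) + 1 ≤ H(t[v])`. -/
def InsertAS (t θ : FTree) : Prop :=
  ∃ (v : ℕ) (s : FTree), v ∈ t.supp ∧ Disjoint s.supp t.supp ∧
    s.height + 1 ≤ t.heightAt v ∧
    θ.supp = t.supp ∪ s.supp ∧ θ.root = t.root ∧ θ.par s.root = v ∧
    (∀ x ∈ t.supp, θ.par x = t.par x) ∧ (∀ x ∈ s.supp, x ≠ s.root → θ.par x = s.par x)

/-- One allowed inserting operation. -/
def InsertStep (t θ : FTree) : Prop := InsertAI t θ ∨ InsertAS t θ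

/-- Allowed deleting operation (DI): deleting an internal vertex `v`, child of `u`,
having a unique child `c` (which becomes a child of `u`); allowed only if `u` has
another child `v'` with `H(t[v']) ≥ H(t[v])`. -/
def DeleteDI (t θ : FTree) : Prop :=
  ∃ u v c, v ∈ t.children u ∧ t.children v = {c} ∧
    (∃ v' ∈ t.children u, v' ≠ v ∧ t.heightAt v ≤ t.heightAt v') ∧
    θ.supp = t.supp.erase v ∧ θ.root = t.root ∧ θ.par c = u ∧
    ∀ x ∈ t.supp, x ≠ v → x ≠ c → θ.par x = t.par x

/-- Allowed deleting operation (DS): deleting the whole subtree rooted at a child `w`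
of `v`; allowed only if `v` has another child `w'` with `H(t[w']) + 1 = H(t[v])`. -/
def DeleteDS (t θ : FTree) : Prop :=
  ∃ v w, w ∈ t.children v ∧
    (∃ w' ∈ t.children v, w' ≠ w ∧ t.heightAt w' + 1 = t.heightAt v) ∧
    θ.supp = t.supp \ t.desc w ∧ θ.root = t.root ∧
    ∀ x ∈ θ.supp, θ.par x = t.par x

/-- One allowed deleting operation. -/
def DeleteStep (t θ : FTree) : Prop := DeleteDI t θ ∨ DeleteDS t θ

/-- A general single-vertex inserting operation: a new vertex `w` is added as a child
of `v`, and the vertices of a subset `C` of the children of `v` become children of `w`. -/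
def GeneralInsert (t θ : FTree) : Prop :=
  ∃ (v w : ℕ) (C : Finset ℕ), v ∈ t.supp ∧ w ∉ t.supp ∧ C ⊆ t.children v ∧
    θ.supp = insert w t.supp ∧ θ.root = t.root ∧ θ.par w = v ∧
    (∀ x ∈ C, θ.par x = w) ∧ ∀ x ∈ t.supp, x ∉ C → θ.par x = t.par x

/-- Cost of a constrained mapping with domain `D`: vertices of `t` not in the domain
are deleted, vertices of `s` not in the image are inserted (unit costs). -/
def mappingCost (t s : FTree) (D : Finset ℕ) (φ : ℕ → ℕ) : ℕ :=
  (t.numV - D.card) + (s.numV - (D.image φ).card)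

/-- Zhang's constrained edit distance between unordered trees: the minimal cost
associated with a constrained mapping between `t` and `s`. -/
noncomputable def DZ (t s : FTree) : ℕ :=
  sInf { c | ∃ (D : Finset ℕ) (φ : ℕ → ℕ), ZhangMapping t s D φ ∧ c = mappingCost t s D φ }

end FTree
namespace FTree

lemma iterate_mem (t : FTree) {v : ℕ} (hv : v ∈ t.supp) (n : ℕ) : t.par^[n] v ∈ t.supp := by
  induction n with
  | zero => simpa
  | succ n ih => rw [Function.iterate_succ_apply']; exact t.par_mem _ ih

lemma iterate_depth_eq_root (t : FTree) {v : ℕ} (hv : v ∈ t.supp) :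
    t.par^[t.depth v] v = t.root := by
  rw [depth, dif_pos hv]; exact Nat.find_spec (t.reach v hv)

lemma depth_le (t : FTree) {v : ℕ} (hv : v ∈ t.supp) {n : ℕ} (h : t.par^[n] v = t.root) :
    t.depth v ≤ n := by
  rw [depth, dif_pos hv]; exact Nat.find_le h

lemma depth_root (t : FTree) : t.depth t.root = 0 :=
  Nat.le_zero.1 (t.depth_le t.root_mem (by simp))

lemma eq_root_of_depth_eq_zero (t : FTree) {v : ℕ} (hv : v ∈ t.supp) (h : t.depth v = 0) :
    v = t.root := by
  have := t.iterate_depth_eq_root hv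
  rwa [h] at this

lemma depth_par (t : FTree) {v : ℕ} (hv : v ∈ t.supp) (hvr : v ≠ t.root) :
    t.depth v = t.depth (t.par v) + 1 := by
  have hp : t.par v ∈ t.supp := t.par_mem v hv
  have h2 : t.depth v ≤ t.depth (t.par v) + 1 := by
    apply t.depth_le hv
    rw [Function.iterate_succ_apply]; exact t.iterate_depth_eq_root hp
  have h3 : t.depth v ≠ 0 := fun h0 => hvr (t.eq_root_of_depth_eq_zero hv h0)
  have h4 : t.depth (t.par v) ≤ t.depth v - 1 := by
    apply t.depth_le hp
    have h5 := t.iterate_depth_eq_root hv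
    rw [← h5, ← Function.iterate_succ_apply]
    congr 1
    omega
  omega

lemma depth_iterate (t : FTree) {v : ℕ} (hv : v ∈ t.supp) {n : ℕ} (hn : n ≤ t.depth v) :
    t.depth (t.par^[n] v) + n = t.depth v := by
  have hm : t.par^[n] v ∈ t.supp := t.iterate_mem hv n
  have h1 : t.depth (t.par^[n] v) ≤ t.depth v - n := by
    apply t.depth_le hm
    rw [← Function.iterate_add_apply]
    have h : t.depth v - n + n = t.depth v := by omega
    rw [h]; exact t.iterate_depth_eq_root hv
  have h2 : t.depth v ≤ t.depth (t.par^[n] v) + n := by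
    apply t.depth_le hv
    rw [Function.iterate_add_apply]
    exact t.iterate_depth_eq_root hm
  omega

lemma IsDesc.mem_supp {t : FTree} {v w : ℕ} (h : t.IsDesc v w) : v ∈ t.supp := by
  obtain ⟨hw, n, hn, he⟩ := h
  exact he ▸ t.iterate_mem hw n

lemma depth_le_of_isDesc {t : FTree} {v w : ℕ} (h : t.IsDesc v w) : t.depth v ≤ t.depth w := by
  obtain ⟨hw, n, hn, he⟩ := h
  have := t.depth_iterate hw hn
  rw [he] at this; omega

lemma isDesc_self (t : FTree) {v : ℕ} (hv : v ∈ t.supp) : t.IsDesc v v :=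
  ⟨hv, 0, Nat.zero_le _, rfl⟩

lemma isDesc_trans {t : FTree} {u v w : ℕ} (h1 : t.IsDesc u v) (h2 : t.IsDesc v w) :
    t.IsDesc u w := by
  obtain ⟨hv, m, hm, hem⟩ := h1
  obtain ⟨hw, n, hn, hen⟩ := h2
  have hd := t.depth_iterate hw hn
  rw [hen] at hd
  refine ⟨hw, m + n, by omega, ?_⟩
  rw [Function.iterate_add_apply, hen, hem]

lemma isDesc_eq {t : FTree} {u v : ℕ} (h1 : t.IsDesc u v) (h2 : t.depth v ≤ t.depth u) :
    u = v := by
  obtain ⟨hv, n, hn, he⟩ := h1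
  have hd := t.depth_iterate hv hn
  rw [he] at hd
  have : n = 0 := by omega
  rw [this] at he; exact he.symm

lemma isDesc_par_iff {t : FTree} {u x : ℕ} (hx : x ∈ t.supp) (hxr : x ≠ t.root)
    (hux : u ≠ x) : t.IsDesc u x ↔ t.IsDesc u (t.par x) := by
  have hp : t.par x ∈ t.supp := t.par_mem x hx
  have hd : t.depth x = t.depth (t.par x) + 1 := t.depth_par hx hxr
  constructor
  · rintro ⟨-, n, hn, he⟩
    have hn0 : n ≠ 0 := by rintro rfl; exact hux he.symm
    refine ⟨hp, n - 1, by omega, ?_⟩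
    rw [← Function.iterate_succ_apply]
    have h : (n - 1).succ = n := by omega
    rw [h]; exact he
  · rintro ⟨-, n, hn, he⟩
    refine ⟨hx, n + 1, by omega, ?_⟩
    rw [Function.iterate_succ_apply]
    exact he

lemma isDesc_comparable {t : FTree} {u c x : ℕ} (h1 : t.IsDesc u x) (h2 : t.IsDesc c x) :
    t.IsDesc u c ∨ t.IsDesc c u := by
  obtain ⟨hx, a, ha, hea⟩ := h1
  obtain ⟨-, b, hb, heb⟩ := h2
  rcases le_total a b with hab | hab
  · right
    have hu : t.par^[a] x ∈ t.supp := t.iterate_mem hx a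
    have hd := t.depth_iterate hx ha
    refine ⟨hea ▸ hu, b - a, ?_, ?_⟩
    · rw [← hea]; omega
    · rw [← hea, ← Function.iterate_add_apply, show b - a + a = b by omega]; exact heb
  · left
    have hc : t.par^[b] x ∈ t.supp := t.iterate_mem hx b
    have hd := t.depth_iterate hx hb
    refine ⟨heb ▸ hc, a - b, ?_, ?_⟩
    · rw [← heb]; omega
    · rw [← heb, ← Function.iterate_add_apply, show a - b + b = a by omega]; exact hea

lemma mem_desc {t : FTree} {v w : ℕ} : w ∈ t.desc v ↔ w ∈ t.supp ∧ t.IsDesc v w := by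
  simp [desc]

lemma self_mem_desc (t : FTree) {v : ℕ} (hv : v ∈ t.supp) : v ∈ t.desc v :=
  mem_desc.2 ⟨hv, t.isDesc_self hv⟩

lemma sup_desc_eq (t : FTree) {v : ℕ} (hv : v ∈ t.supp) :
    (t.desc v).sup t.depth = t.depth v + t.heightAt v := by
  have h := Finset.le_sup (f := t.depth) (t.self_mem_desc hv)
  unfold heightAt
  have h2 : ((t.desc v).sup fun w => t.depth w) = (t.desc v).sup t.depth := rfl
  rw [h2]
  omega

lemma depth_le_of_mem_desc {t : FTree} {v w : ℕ} (hv : v ∈ t.supp) (hw : w ∈ t.desc v) :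
    t.depth w ≤ t.depth v + t.heightAt v := by
  have := Finset.le_sup (f := t.depth) hw
  rwa [t.sup_desc_eq hv] at this

lemma desc_mono {t : FTree} {u v : ℕ} (h : t.IsDesc u v) : t.desc v ⊆ t.desc u := by
  intro x hx
  rw [mem_desc] at hx ⊢
  exact ⟨hx.1, isDesc_trans h hx.2⟩

lemma isDesc_root (t : FTree) {w : ℕ} (hw : w ∈ t.supp) : t.IsDesc t.root w :=
  ⟨hw, t.depth w, le_refl _, t.iterate_depth_eq_root hw⟩

lemma depth_le_height (t : FTree) {w : ℕ} (hw : w ∈ t.supp) : t.depth w ≤ t.height := by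
  have h1 : w ∈ t.desc t.root := mem_desc.2 ⟨hw, t.isDesc_root hw⟩
  have := t.depth_le_of_mem_desc t.root_mem h1
  rw [height] at *
  have := t.depth_root
  omega

lemma mem_children {t : FTree} {v c : ℕ} :
    c ∈ t.children v ↔ c ∈ t.supp ∧ t.par c = v ∧ c ≠ t.root := by
  simp [children]

end FTree
namespace FTree

lemma heightAt_def (t : FTree) (v : ℕ) :
    t.heightAt v = (t.desc v).sup t.depth - t.depth v := rfl

lemma insertAI_inv {t θ : FTree} (h : InsertAI t θ) :
    t.supp ⊆ θ.supp ∧ θ.root = t.root ∧ ∀ u ∈ t.supp, θ.heightAt u = t.heightAt u := by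
  obtain ⟨v, c, w, hv, hc, hw, hH, hsupp, hroot, hpw, hpc, hpar⟩ := h
  obtain ⟨hc1, hc2, hc3⟩ := mem_children.1 hc
  have hsub : t.supp ⊆ θ.supp := by rw [hsupp]; exact Finset.subset_insert _ _
  refine ⟨hsub, hroot, ?_⟩
  have hwr : w ≠ t.root := fun h => hw (h ▸ t.root_mem)
  have hwm : w ∈ θ.supp := by rw [hsupp]; exact Finset.mem_insert_self _ _
  have hwθr : w ≠ θ.root := by rw [hroot]; exact hwr
  have hdc : t.depth c = t.depth v + 1 := by rw [← hc2]; exact t.depth_par hc1 hc3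
  have hvc : ¬ t.IsDesc c v := by
    intro h
    have := depth_le_of_isDesc h
    omega
  have hvdc : t.IsDesc v c := ⟨hc1, 1, by omega, by simpa using hc2⟩
  -- the key structural lemma, by strong induction on depth
  have key : ∀ N, ∀ x ∈ t.supp, t.depth x ≤ N →
      ((t.IsDesc c x → θ.depth x = t.depth x + 1) ∧
       (¬ t.IsDesc c x → θ.depth x = t.depth x)) ∧
      (∀ u ∈ t.supp, (θ.IsDesc u x ↔ t.IsDesc u x)) ∧
      (θ.IsDesc w x ↔ t.IsDesc c x) := by
    intro N
    induction N with
    | zero =>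
      intro x hx hle
      have hxr : x = t.root := t.eq_root_of_depth_eq_zero hx (by omega)
      subst hxr
      have hcx : ¬ t.IsDesc c t.root := by
        intro h
        exact hc3 (isDesc_eq h (by rw [t.depth_root]; omega))
      have hdθ : θ.depth t.root = 0 := by rw [← hroot]; exact θ.depth_root
      refine ⟨⟨fun h => absurd h hcx, fun _ => by rw [hdθ, t.depth_root]⟩, ?_, ?_⟩
      · intro u hu
        constructor
        · intro h
          have he : u = t.root := isDesc_eq h (by rw [hdθ]; omega)
          rw [he]; exact t.isDesc_self t.root_mem
        · intro h
          have he : u = t.root := isDesc_eq h (by rw [t.depth_root]; omega)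
          rw [he, ← hroot]
          exact θ.isDesc_self (hroot ▸ hsub t.root_mem)
      · constructor
        · intro h
          exact absurd (isDesc_eq h (by rw [hdθ]; omega)) hwr
        · intro h; exact absurd (isDesc_eq h (by rw [t.depth_root]; omega)) hc3
    | succ N ih =>
      intro x hx hle
      by_cases hxr : x = t.root
      · exact ih x hx (by rw [hxr, t.depth_root]; omega)
      have hxθ : x ∈ θ.supp := hsub hx
      have hxw : x ≠ w := fun h => hw (h ▸ hx)
      have hxθr : x ≠ θ.root := by rw [hroot]; exact hxr
      by_cases hxc : x = c
      · have ihv := ih v hv (by rw [hxc] at hle; omega)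
        have hdv : θ.depth v = t.depth v := ihv.1.2 hvc
        have hdw : θ.depth w = t.depth v + 1 := by
          rw [θ.depth_par hwm hwθr, hpw, hdv]
        have hdcθ : θ.depth c = t.depth c + 1 := by
          have hcθ : c ∈ θ.supp := hsub hc1
          have hcθr : c ≠ θ.root := by rw [hroot]; exact hc3
          rw [θ.depth_par hcθ hcθr, hpc, hdw]; omega
        refine ⟨?_, ?_, ?_⟩
        · rw [hxc]
          exact ⟨fun _ => hdcθ, fun h => absurd (t.isDesc_self hc1) h⟩
        · rw [hxc]
          intro u hu
          by_cases huc : u = c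
          · rw [huc]
            simp [t.isDesc_self hc1, θ.isDesc_self (hsub hc1)]
          have huw : u ≠ w := fun h => hw (h ▸ hu)
          have hcθ : c ∈ θ.supp := hsub hc1
          have hcθr : c ≠ θ.root := by rw [hroot]; exact hc3
          rw [isDesc_par_iff hcθ hcθr huc, hpc,
              isDesc_par_iff hwm hwθr huw, hpw,
              isDesc_par_iff hc1 hc3 huc, hc2]
          exact ihv.2.1 u hu
        · rw [hxc]
          constructor
          · intro _; exact t.isDesc_self hc1
          · intro _
            exact ⟨hsub hc1, 1, by rw [hdcθ]; omega, by simpa using hpc⟩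
      · -- x ≠ c, x ≠ root
        have hpx : θ.par x = t.par x := hpar x hx hxc
        have hpm : t.par x ∈ t.supp := t.par_mem x hx
        have hdpx : t.depth x = t.depth (t.par x) + 1 := t.depth_par hx hxr
        have ihp := ih (t.par x) hpm (by omega)
        have hcx : t.IsDesc c x ↔ t.IsDesc c (t.par x) :=
          isDesc_par_iff hx hxr (fun h => hxc h.symm)
        have hdθ : θ.depth x = θ.depth (t.par x) + 1 := by
          rw [← hpx]; exact θ.depth_par hxθ hxθr
        refine ⟨⟨?_, ?_⟩, ?_, ?_⟩
        · intro hd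
          have := ihp.1.1 (hcx.1 hd)
          omega
        · intro hd
          have := ihp.1.2 (fun hh => hd (hcx.2 hh))
          omega
        · intro u hu
          by_cases hux : u = x
          · rw [hux]
            simp [t.isDesc_self hx, θ.isDesc_self hxθ]
          rw [isDesc_par_iff hxθ hxθr hux, hpx, isDesc_par_iff hx hxr hux]
          exact ihp.2.1 u hu
        · rw [isDesc_par_iff hxθ hxθr hxw.symm, hpx, hcx]
          exact ihp.2.2
  have keyd1 : ∀ x ∈ t.supp, t.IsDesc c x → θ.depth x = t.depth x + 1 :=
    fun x hx => (key (t.depth x) x hx le_rfl).1.1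
  have keyd0 : ∀ x ∈ t.supp, ¬ t.IsDesc c x → θ.depth x = t.depth x :=
    fun x hx => (key (t.depth x) x hx le_rfl).1.2
  have keyi : ∀ x ∈ t.supp, ∀ u ∈ t.supp, (θ.IsDesc u x ↔ t.IsDesc u x) :=
    fun x hx => (key (t.depth x) x hx le_rfl).2.1
  have hdvθ : θ.depth v = t.depth v := keyd0 v hv hvc
  have hdw : θ.depth w = t.depth v + 1 := by rw [θ.depth_par hwm hwθr, hpw, hdvθ]
  have hdescw : ∀ u ∈ t.supp, (θ.IsDesc u w ↔ t.IsDesc u v) := by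
    intro u hu
    have huw : u ≠ w := fun h => hw (h ▸ hu)
    rw [isDesc_par_iff hwm hwθr huw, hpw]
    exact keyi v hv u hu
  intro u hu
  have huθ : u ∈ θ.supp := hsub hu
  have hA := t.sup_desc_eq hu
  have hne : (t.desc u).Nonempty := ⟨u, t.self_mem_desc hu⟩
  -- characterize θ.desc u
  have hdesc1 : t.IsDesc u v → θ.desc u = insert w (t.desc u) := by
    intro huv
    ext x
    by_cases hxw : x = w
    · rw [hxw]
      simp only [mem_desc, Finset.mem_insert]
      simp [hwm, (hdescw u hu).2 huv]
    · have hxt : x ∈ θ.supp ↔ x ∈ t.supp := by rw [hsupp]; simp [hxw]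
      simp only [mem_desc, Finset.mem_insert, hxw, false_or]
      constructor
      · rintro ⟨h1, h2⟩
        have hxs := hxt.1 h1
        exact ⟨hxs, (keyi x hxs u hu).1 h2⟩
      · rintro ⟨h1, h2⟩
        exact ⟨hxt.2 h1, (keyi x h1 u hu).2 h2⟩
  have hdesc0 : ¬ t.IsDesc u v → θ.desc u = t.desc u := by
    intro huv
    ext x
    by_cases hxw : x = w
    · rw [hxw]
      simp only [mem_desc]
      constructor
      · rintro ⟨-, h2⟩; exact absurd ((hdescw u hu).1 h2) huv
      · rintro ⟨h1, -⟩; exact absurd h1 hw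
    · have hxt : x ∈ θ.supp ↔ x ∈ t.supp := by rw [hsupp]; simp [hxw]
      simp only [mem_desc]
      constructor
      · rintro ⟨h1, h2⟩
        have hxs := hxt.1 h1
        exact ⟨hxs, (keyi x hxs u hu).1 h2⟩
      · rintro ⟨h1, h2⟩
        exact ⟨hxt.2 h1, (keyi x h1 u hu).2 h2⟩
  by_cases hcu : t.IsDesc c u
  · -- u inside subtree of c : all depths shift by 1
    have huv : ¬ t.IsDesc u v := fun h => hvc (isDesc_trans hcu h)
    rw [heightAt_def, hdesc0 huv]
    have hshift : ∀ x ∈ t.desc u, θ.depth x = t.depth x + 1 := by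
      intro x hx
      rw [mem_desc] at hx
      exact keyd1 x hx.1 (isDesc_trans hcu hx.2)
    have hsup : (t.desc u).sup θ.depth = (t.desc u).sup t.depth + 1 := by
      apply le_antisymm
      · apply Finset.sup_le
        intro x hx
        rw [hshift x hx]
        exact Nat.add_le_add_right (Finset.le_sup hx) 1
      · obtain ⟨x, hx, hxe⟩ := Finset.exists_mem_eq_sup _ hne t.depth
        rw [hxe, ← hshift x hx]
        exact Finset.le_sup hx
    have hdu : θ.depth u = t.depth u + 1 := keyd1 u hu hcu
    rw [hsup, hA, hdu, heightAt_def, hA]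
    omega
  · have hdu : θ.depth u = t.depth u := keyd0 u hu hcu
    have hsupθ : (t.desc u).sup θ.depth = (t.desc u).sup t.depth := by
      apply le_antisymm
      · apply Finset.sup_le
        intro x hx
        have hxs := (mem_desc.1 hx).1
        by_cases hcx : t.IsDesc c x
        · -- then u is a (weak) ancestor of v, and depth x + 1 ≤ A
          have hcomp := isDesc_comparable (mem_desc.1 hx).2 hcx
          have huv : t.IsDesc u v := by
            rcases hcomp with h | h
            · by_cases huc : u = c
              · rw [huc] at hcu; exact absurd (t.isDesc_self hc1) hcu
              · have h2 := (isDesc_par_iff hc1 hc3 huc).1 h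
                rwa [hc2] at h2
            · exact absurd h hcu
          have hxc : x ∈ t.desc c := mem_desc.2 ⟨hxs, hcx⟩
          have h1 := t.depth_le_of_mem_desc hc1 hxc
          have h2 : t.depth v + t.heightAt v ≤ (t.desc u).sup t.depth := by
            rw [← t.sup_desc_eq hv]
            exact Finset.sup_mono (desc_mono huv)
          have h3 := keyd1 x hxs hcx
          omega
        · rw [keyd0 x hxs hcx]
          exact Finset.le_sup hx
      · apply Finset.sup_le
        intro x hx
        have hxs := (mem_desc.1 hx).1
        have h3 : t.depth x ≤ θ.depth x := by
          by_cases hcx : t.IsDesc c x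
          · have := keyd1 x hxs hcx; omega
          · have := keyd0 x hxs hcx; omega
        exact le_trans h3 (Finset.le_sup (f := θ.depth) hx)
    by_cases huv : t.IsDesc u v
    · have h2 : t.depth v + t.heightAt v ≤ t.depth u + t.heightAt u := by
        rw [← hA, ← t.sup_desc_eq hv]
        exact Finset.sup_mono (desc_mono huv)
      have hcdesc : c ∈ t.desc v := mem_desc.2 ⟨hc1, hvdc⟩
      have h3 := t.depth_le_of_mem_desc hv hcdesc
      have hS : (θ.desc u).sup θ.depth = t.depth u + t.heightAt u := by
        rw [hdesc1 huv, Finset.sup_insert, hsupθ, hA]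
        exact sup_eq_right.2 (by rw [hdw]; omega)
      rw [heightAt_def, hS, hdu]
      omega
    · have hS : (θ.desc u).sup θ.depth = t.depth u + t.heightAt u := by
        rw [hdesc0 huv, hsupθ, hA]
      rw [heightAt_def, hS, hdu]
      omega

end FTree
namespace FTree

lemma insertAS_inv {t θ : FTree} (h : InsertAS t θ) :
    t.supp ⊆ θ.supp ∧ θ.root = t.root ∧ ∀ u ∈ t.supp, θ.heightAt u = t.heightAt u := by
  obtain ⟨v, s, hv, hdisj, hH, hsupp, hroot, hpr, hpt, hps⟩ := h
  have hsub : t.supp ⊆ θ.supp := by rw [hsupp]; exact Finset.subset_union_left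
  have hsubs : s.supp ⊆ θ.supp := by rw [hsupp]; exact Finset.subset_union_right
  refine ⟨hsub, hroot, ?_⟩
  have hst : ∀ x ∈ s.supp, x ∉ t.supp := fun x hx => Finset.disjoint_left.1 hdisj hx
  -- depths and ancestors of old vertices are unchanged
  have key_t : ∀ N, ∀ x ∈ t.supp, t.depth x ≤ N →
      θ.depth x = t.depth x ∧ ∀ u ∈ t.supp, (θ.IsDesc u x ↔ t.IsDesc u x) := by
    intro N
    induction N with
    | zero =>
      intro x hx hle
      have hxr : x = t.root := t.eq_root_of_depth_eq_zero hx (by omega)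
      subst hxr
      have hdθ : θ.depth t.root = 0 := by rw [← hroot]; exact θ.depth_root
      refine ⟨by rw [hdθ, t.depth_root], ?_⟩
      intro u hu
      constructor
      · intro h
        have he : u = t.root := isDesc_eq h (by rw [hdθ]; omega)
        rw [he]; exact t.isDesc_self t.root_mem
      · intro h
        have he : u = t.root := isDesc_eq h (by rw [t.depth_root]; omega)
        rw [he, ← hroot]
        exact θ.isDesc_self (hroot ▸ hsub t.root_mem)
    | succ N ih =>
      intro x hx hle
      by_cases hxr : x = t.root
      · exact ih x hx (by rw [hxr, t.depth_root]; omega)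
      have hxθ : x ∈ θ.supp := hsub hx
      have hxθr : x ≠ θ.root := by rw [hroot]; exact hxr
      have hpx : θ.par x = t.par x := hpt x hx
      have hpm : t.par x ∈ t.supp := t.par_mem x hx
      have hdpx : t.depth x = t.depth (t.par x) + 1 := t.depth_par hx hxr
      have ihp := ih (t.par x) hpm (by omega)
      refine ⟨?_, ?_⟩
      · rw [θ.depth_par hxθ hxθr, hpx, ihp.1]; omega
      · intro u hu
        by_cases hux : u = x
        · rw [hux]
          simp [t.isDesc_self hx, θ.isDesc_self hxθ]
        rw [isDesc_par_iff hxθ hxθr hux, hpx, isDesc_par_iff hx hxr hux]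
        exact ihp.2 u hu
  have keyd : ∀ x ∈ t.supp, θ.depth x = t.depth x :=
    fun x hx => (key_t (t.depth x) x hx le_rfl).1
  have keyi : ∀ x ∈ t.supp, ∀ u ∈ t.supp, (θ.IsDesc u x ↔ t.IsDesc u x) :=
    fun x hx => (key_t (t.depth x) x hx le_rfl).2
  -- new vertices hang below v
  have hrs : s.root ∈ θ.supp := hsubs s.root_mem
  have hrsr : s.root ≠ θ.root := by
    rw [hroot]
    intro h
    exact hst s.root s.root_mem (h ▸ t.root_mem)
  have key_s : ∀ N, ∀ y ∈ s.supp, s.depth y ≤ N →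
      θ.depth y = t.depth v + 1 + s.depth y ∧
      ∀ u ∈ t.supp, (θ.IsDesc u y ↔ t.IsDesc u v) := by
    intro N
    induction N with
    | zero =>
      intro y hy hle
      have hyr : y = s.root := s.eq_root_of_depth_eq_zero hy (by omega)
      subst hyr
      refine ⟨?_, ?_⟩
      · rw [θ.depth_par hrs hrsr, hpr, keyd v hv, s.depth_root]
      · intro u hu
        have hus : u ≠ s.root := fun h => hst s.root s.root_mem (h ▸ hu)
        rw [isDesc_par_iff hrs hrsr hus, hpr]
        exact keyi v hv u hu
    | succ N ih =>
      intro y hy hle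
      by_cases hyr : y = s.root
      · exact ih y hy (by rw [hyr, s.depth_root]; omega)
      have hyθ : y ∈ θ.supp := hsubs hy
      have hyθr : y ≠ θ.root := by
        rw [hroot]; intro h; exact hst y hy (h ▸ t.root_mem)
      have hpy : θ.par y = s.par y := hps y hy hyr
      have hpm : s.par y ∈ s.supp := s.par_mem y hy
      have hdpy : s.depth y = s.depth (s.par y) + 1 := s.depth_par hy hyr
      have ihp := ih (s.par y) hpm (by omega)
      refine ⟨?_, ?_⟩
      · rw [θ.depth_par hyθ hyθr, hpy, ihp.1]; omega
      · intro u hu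
        have huy : u ≠ y := fun h => hst y hy (h ▸ hu)
        rw [isDesc_par_iff hyθ hyθr huy, hpy]
        exact ihp.2 u hu
  have keysd : ∀ y ∈ s.supp, θ.depth y = t.depth v + 1 + s.depth y :=
    fun y hy => (key_s (s.depth y) y hy le_rfl).1
  have keysi : ∀ y ∈ s.supp, ∀ u ∈ t.supp, (θ.IsDesc u y ↔ t.IsDesc u v) :=
    fun y hy => (key_s (s.depth y) y hy le_rfl).2
  intro u hu
  have hA := t.sup_desc_eq hu
  have hdu : θ.depth u = t.depth u := keyd u hu
  have hsupθ : (t.desc u).sup θ.depth = (t.desc u).sup t.depth := by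
    apply le_antisymm
    · exact Finset.sup_le fun x hx => by
        rw [keyd x (mem_desc.1 hx).1]; exact Finset.le_sup hx
    · exact Finset.sup_le fun x hx => by
        rw [← keyd x (mem_desc.1 hx).1]; exact Finset.le_sup (f := θ.depth) hx
  by_cases huv : t.IsDesc u v
  · have hdesc : θ.desc u = t.desc u ∪ s.supp := by
      ext x
      simp only [mem_desc, Finset.mem_union, hsupp]
      by_cases hxs : x ∈ s.supp
      · simp [hxs, (keysi x hxs u hu).2 huv]
      · constructor
        · rintro ⟨h1, h2⟩
          have hxt : x ∈ t.supp := by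
            rcases h1 with h | h
            · exact h
            · exact absurd h hxs
          exact Or.inl ⟨hxt, (keyi x hxt u hu).1 h2⟩
        · rintro (⟨h1, h2⟩ | h1)
          · exact ⟨Or.inl h1, (keyi x h1 u hu).2 h2⟩
          · exact absurd h1 hxs
    have hsups : (s.supp).sup θ.depth ≤ t.depth u + t.heightAt u := by
      apply Finset.sup_le
      intro y hy
      have h1 := keysd y hy
      have h2 : s.depth y ≤ s.height := s.depth_le_height hy
      have h3 : t.depth v + t.heightAt v ≤ t.depth u + t.heightAt u := by
        rw [← hA, ← t.sup_desc_eq hv]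
        exact Finset.sup_mono (desc_mono huv)
      omega
    have hS : (θ.desc u).sup θ.depth = t.depth u + t.heightAt u := by
      rw [hdesc, Finset.sup_union, hsupθ, hA]
      exact sup_eq_left.2 hsups
    rw [heightAt_def, hS, hdu]
    omega
  · have hdesc : θ.desc u = t.desc u := by
      ext x
      simp only [mem_desc, hsupp, Finset.mem_union]
      by_cases hxs : x ∈ s.supp
      · constructor
        · rintro ⟨-, h2⟩; exact absurd ((keysi x hxs u hu).1 h2) huv
        · rintro ⟨h1, -⟩; exact absurd hxs (fun h => hst x h h1)
      · constructor
        · rintro ⟨h1, h2⟩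
          have hxt : x ∈ t.supp := by
            rcases h1 with h | h
            · exact h
            · exact absurd h hxs
          exact ⟨hxt, (keyi x hxt u hu).1 h2⟩
        · rintro ⟨h1, h2⟩
          exact ⟨Or.inl h1, (keyi x h1 u hu).2 h2⟩
    have hS : (θ.desc u).sup θ.depth = t.depth u + t.heightAt u := by
      rw [hdesc, hsupθ, hA]
    rw [heightAt_def, hS, hdu]
    omega

end FTree
namespace FTree

lemma insertStep_inv {t θ : FTree} (h : InsertStep t θ) :
    t.supp ⊆ θ.supp ∧ θ.root = t.root ∧ ∀ u ∈ t.supp, θ.heightAt u = t.heightAt u :=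
  h.elim insertAI_inv insertAS_inv

end FTree

/-- If `θ` is obtained from `t` by a sequence of allowed inserting
operations AI and AS, then the height of `θ` equals the height of `t` and, more
generally, for every vertex `u` of `t` the height of the subtree rooted at `u` in `θ`
equals `H(t[u])`. -/
theorem insert_steps_preserve_heights (t θ : FTree)
    (hreach : Relation.ReflTransGen FTree.InsertStep t θ) :
    θ.height = t.height ∧ ∀ u ∈ t.supp, θ.heightAt u = t.heightAt u := by
  have main : t.supp ⊆ θ.supp ∧ θ.root = t.root ∧
      ∀ u ∈ t.supp, θ.heightAt u = t.heightAt u := by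
    induction hreach using Relation.ReflTransGen.head_induction_on with
    | refl => exact ⟨subset_rfl, rfl, fun u _ => rfl⟩
    | head hstep _ ih =>
      obtain ⟨h1, h2, h3⟩ := FTree.insertStep_inv hstep
      exact ⟨h1.trans ih.1, ih.2.1.trans h2,
        fun u hu => (ih.2.2 u (h1 hu)).trans (h3 u hu)⟩
  obtain ⟨h1, h2, h3⟩ := main
  refine ⟨?_, h3⟩
  rw [FTree.height, FTree.height, h2]
  exact h3 t.root t.root_mem
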